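/- In the finite growth model with no white vertices, for an initially green vertex x, the vertex R produced by the stopped invasion procedure from x (the first initially red vertex invaded) is responsible for x becoming red: when x becomes red, R is the unique initially red vertex of the red cluster containing x. -/

import Mathlib

open MeasureTheory ProbabilityTheory Set
open scoped ENNReal

namespace RandomSpatialGrowth

/-- The three possible colours of a vertex of the growth model. -/
inductive Color : Type
  | white : Color
  | red : Color
  | green : Color
  deriving DecidableEq

instance : MeasurableSpace Color := ⊤

/-- A numerical encoding of the colours (used only to state independence). -/
def Color.code : Color → ℝ
  | Color.white => 0
  | Color.red => 1
  | Color.green => 2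

variable {V : Type*}

/-- Edge `e` has at least one green end-vertex at time `t`. -/
def greenTouch (col : ℝ → V → Color) (t : ℝ) (e : Sym2 V) : Prop :=
  ∃ v ∈ e, col t v = Color.green

/-- `u` and `v` are joined by a path of edges of the arena `A` that are all open at time `t`. -/
def openConn {G : SimpleGraph V} (A : G.Subgraph) (opn : ℝ → Sym2 V → Prop) (t : ℝ)
    (u v : V) : Prop :=
  Relation.ReflTransGen (fun a b => A.Adj a b ∧ opn t s(a, b)) u v

/-- A time evolution of the growth process on the arena (subgraph) `A` of `G`, with initial
colours `c` and opening times `τ`.  `opn t e` says that the edge `e` is open at time `t` and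
`col t v` is the colour of the vertex `v` at time `t`.  The axioms characterize the dynamics:
all edges are initially closed and an edge of the arena is open at time `t` iff the set of
earlier (nonnegative) times at which it had at least one green end-vertex has Lebesgue measure
at least `τ e`; instantaneously upon openings, white vertices touched by green become green and
green clusters touching red become red, so that at any time a vertex is red iff it is joined by
open edges to an initially red vertex, and it is white iff it is initially white and no
incident edge has opened. -/
structure Evolution {G : SimpleGraph V} (A : G.Subgraph) (c : V → Color)
    (τ : Sym2 V → ℝ) where
  opn : ℝ → Sym2 V → Prop
  col : ℝ → V → Color
  open_iff : ∀ t, 0 ≤ t → ∀ e ∈ A.edgeSet,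
    (opn t e ↔ ENNReal.ofReal (τ e) ≤ volume {s : ℝ | 0 ≤ s ∧ s < t ∧ greenTouch col s e})
  closed_outside : ∀ (t : ℝ) (e : Sym2 V), e ∉ A.edgeSet → ¬ opn t e
  red_iff : ∀ t, 0 ≤ t → ∀ v ∈ A.verts,
    (col t v = Color.red ↔ ∃ w, openConn A opn t v w ∧ c w = Color.red)
  white_iff : ∀ t, 0 ≤ t → ∀ v ∈ A.verts,
    (col t v = Color.white ↔ c v = Color.white ∧ ∀ w, A.Adj v w → ¬ opn t s(v, w))

/-- `u` and `v` belong to the same green cluster at time `t`:  they are joined by a path of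
open edges all of whose vertices are green at time `t`. -/
def greenConn {G : SimpleGraph V} (A : G.Subgraph) (opn : ℝ → Sym2 V → Prop)
    (col : ℝ → V → Color) (t : ℝ) (u v : V) : Prop :=
  Relation.ReflTransGen
    (fun a b => A.Adj a b ∧ opn t s(a, b) ∧ col t a = Color.green ∧ col t b = Color.green) u v

/-- `u` and `v` belong to the same red cluster at time `t`:  they are joined by a path of
open edges all of whose vertices are red at time `t`. -/
def redConn {G : SimpleGraph V} (A : G.Subgraph) (opn : ℝ → Sym2 V → Prop)
    (col : ℝ → V → Color) (t : ℝ) (u v : V) : Prop :=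
  Relation.ReflTransGen
    (fun a b => A.Adj a b ∧ opn t s(a, b) ∧ col t a = Color.red ∧ col t b = Color.red) u v

/-- The green cluster of `v` just before it becomes red: the union over all times `t ≥ 0`
of the green cluster of `v` at time `t`. -/
def Cg {G : SimpleGraph V} {A : G.Subgraph} {c : V → Color} {τ : Sym2 V → ℝ}
    (ev : Evolution A c τ) (v : V) : Set V :=
  {x | ∃ t, 0 ≤ t ∧ ev.col t v = Color.green ∧ greenConn A ev.opn ev.col t v x}

/-- The initially green vertex `v` becomes red due to the initially red vertex `w` :
at some time, `v` is red and its red cluster contains `w`. -/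
def dueTo {G : SimpleGraph V} {A : G.Subgraph} {c : V → Color} {τ : Sym2 V → ℝ}
    (ev : Evolution A c τ) (v w : V) : Prop :=
  c v = Color.green ∧ c w = Color.red ∧
    ∃ t, 0 ≤ t ∧ ev.col t v = Color.red ∧ redConn A ev.opn ev.col t v w

/-- The set `D(w)` of initially green vertices that become red due to `w`. -/
def Dset {G : SimpleGraph V} {A : G.Subgraph} {c : V → Color} {τ : Sym2 V → ℝ}
    (ev : Evolution A c τ) (w : V) : Set V :=
  {v | dueTo ev v w}

/-- The vertex `x` becomes red exactly at time `t₀`. -/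
def becomesRedAt {G : SimpleGraph V} {A : G.Subgraph} {c : V → Color} {τ : Sym2 V → ℝ}
    (ev : Evolution A c τ) (x : V) (t₀ : ℝ) : Prop :=
  0 ≤ t₀ ∧ ev.col t₀ x = Color.red ∧ ∀ s, 0 ≤ s → s < t₀ → ev.col s x ≠ Color.red

/-- The vertex set of the invasion tree grown from `x` after `n` steps, when the `k`-th
invaded edge is `E k`. -/
def treeVerts (x : V) (E : ℕ → Sym2 V) (n : ℕ) : Set V :=
  {x} ∪ ⋃ k < n, {v : V | v ∈ E k}

/-- Step `n` of the invasion procedure started at `x` is correct :  among all edges of `G`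
having exactly one end-vertex in the current tree, `E n` is the one of minimal `τ`-value. -/
def InvStep (G : SimpleGraph V) (τ : Sym2 V → ℝ) (x : V) (E : ℕ → Sym2 V) (n : ℕ) : Prop :=
  E n ∈ G.edgeSet ∧ (∃! v, v ∈ E n ∧ v ∈ treeVerts x E n) ∧
    ∀ e' ∈ G.edgeSet, (∃! v, v ∈ e' ∧ v ∈ treeVerts x E n) → τ (E n) ≤ τ e'

/-- The edges `E 0, …, E (m-1)` form the stopped invasion procedure from `x` :  at each step
the external edge of minimal `τ`-value is added to the tree, the procedure stops as soon as an
initially red vertex is added, and `R` is that first (and only) invaded initially red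
vertex, added at the last step. -/
def StoppedInvasion (G : SimpleGraph V) (c : V → Color) (τ : Sym2 V → ℝ) (x : V)
    (E : ℕ → Sym2 V) (m : ℕ) (R : V) : Prop :=
  0 < m ∧ (∀ n < m, InvStep G τ x E n) ∧
  (∀ n < m, ∀ v ∈ E n, v ∉ treeVerts x E n → (c v = Color.red ↔ n = m - 1)) ∧
  R ∈ E (m - 1) ∧ R ∉ treeVerts x E (m - 1) ∧ c R = Color.red

/-!
Before its last step the invasion tree contains no seed. If a tree vertex is red at time `s`, its
open path to a seed leaves the tree through an edge of `τ`-value at most `s`, hence at least as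
expensive as the next invaded edge. So the tree end of each invaded edge `e` stays green until
`τ e`, and `e` is open at every time `t ≥ τ e`; as `x` is red at `t₀`, every invaded edge has
`τ`-value at most `t₀`, so the whole tree, `R` included, is joined to `x` by open edges at `t₀`.

A red cluster never holds two seeds: just before an edge opens it still has a green end, which is
joined to no seed, so the new edge cannot join two clusters that already contain seeds.
-/

theorem _root_.Sym2.existsUnique_mem_and_mem_of_mem_of_not_mem {α : Type*} {s : Set α} {a b : α}
    (ha : a ∈ s) (hb : b ∉ s) : ∃! v, v ∈ s(a, b) ∧ v ∈ s := by
  refine ⟨a, ⟨Sym2.mem_mk_left a b, ha⟩, fun v ⟨hv, hvs⟩ => ?_⟩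
  rcases Sym2.mem_iff.mp hv with rfl | rfl
  · rfl
  · exact absurd hvs hb

theorem _root_.Relation.ReflTransGen.exists_step_mem_not_mem {α : Type*} {r : α → α → Prop}
    {s : Set α} {u w : α} (h : Relation.ReflTransGen r u w) (hu : u ∈ s) (hw : w ∉ s) :
    ∃ a b, r a b ∧ a ∈ s ∧ b ∉ s := by
  induction h with
  | refl => exact absurd hu hw
  | @tail p q _ hpq ih =>
    by_cases hp : p ∈ s
    · exact ⟨p, q, hpq, hp, hw⟩
    · exact ih hp

/-- The part of the path after its last traversal of `s(a, b)` is an `r₁`-path. -/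
theorem _root_.Relation.ReflTransGen.split_at_edge {α : Type*} {r₁ r₂ : α → α → Prop} {a b u v : α}
    (h : ∀ p q, r₂ p q → r₁ p q ∨ s(p, q) = s(a, b)) (huv : Relation.ReflTransGen r₂ u v) :
    Relation.ReflTransGen r₁ u v ∨ Relation.ReflTransGen r₁ a v ∨
      Relation.ReflTransGen r₁ b v := by
  induction huv with
  | refl => exact Or.inl .refl
  | @tail p q _ hpq ih =>
    rcases h p q hpq with h₁ | hedge
    · exact ih.imp (·.tail h₁) (Or.imp (·.tail h₁) (·.tail h₁))
    · rcases Sym2.eq_iff.mp hedge with ⟨-, rfl⟩ | ⟨-, rfl⟩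
      · exact Or.inr (Or.inr .refl)
      · exact Or.inr (Or.inl .refl)

theorem _root_.Real.exists_nonneg_lt_of_forall_lt {s : Set ℝ} (hs : s.Finite) {θ : ℝ} (hθ : 0 < θ)
    (hlt : ∀ r ∈ s, r < θ) : ∃ t, 0 ≤ t ∧ t < θ ∧ ∀ r ∈ s, r ≤ t := by
  obtain ⟨t, ht, hmax⟩ := Set.exists_max_image (insert 0 s) id (hs.insert 0) ⟨0, mem_insert _ _⟩
  refine ⟨t, hmax 0 (mem_insert _ _), ?_, fun r hr => hmax r (mem_insert_of_mem _ hr)⟩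
  rcases ht with rfl | ht
  exacts [hθ, hlt t ht]

section Connectivity

variable {G : SimpleGraph V} {A : G.Subgraph}

theorem openConn.symm {opn : ℝ → Sym2 V → Prop} {t : ℝ} {u v : V}
    (h : openConn A opn t u v) : openConn A opn t v u :=
  Relation.ReflTransGen.mono (fun _ _ hab => ⟨hab.1.symm, Sym2.eq_swap ▸ hab.2⟩) _ _
    (Relation.ReflTransGen.swap _ _ h)

theorem openConn_of_redConn {opn : ℝ → Sym2 V → Prop} {col : ℝ → V → Color} {t : ℝ}
    {u v : V} (h : redConn A opn col t u v) : openConn A opn t u v :=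
  Relation.ReflTransGen.mono (fun _ _ hab => ⟨hab.1, hab.2.1⟩) _ _ h

end Connectivity

namespace Evolution

variable {G : SimpleGraph V} {A : G.Subgraph} {c : V → Color} {τ : Sym2 V → ℝ}
  (ev : Evolution A c τ)

theorem mem_edgeSet_of_opn {t : ℝ} {e : Sym2 V} (h : ev.opn t e) : e ∈ A.edgeSet :=
  not_not.mp fun he => ev.closed_outside t e he h

theorem opn_mono {t t' : ℝ} (ht : 0 ≤ t) (htt' : t ≤ t') {e : Sym2 V} (h : ev.opn t e) :
    ev.opn t' e := by
  have he := ev.mem_edgeSet_of_opn h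
  rw [ev.open_iff t ht e he] at h
  rw [ev.open_iff t' (ht.trans htt') e he]
  exact h.trans (measure_mono fun s hs => ⟨hs.1, hs.2.1.trans_le htt', hs.2.2⟩)

theorem red_mono {t t' : ℝ} (ht : 0 ≤ t) (htt' : t ≤ t') {v : V} (hv : v ∈ A.verts)
    (h : ev.col t v = Color.red) : ev.col t' v = Color.red := by
  obtain ⟨w, hvw, hw⟩ := (ev.red_iff t ht v hv).mp h
  exact (ev.red_iff t' (ht.trans htt') v hv).mpr
    ⟨w, Relation.ReflTransGen.mono (fun _ _ hab => ⟨hab.1, ev.opn_mono ht htt' hab.2⟩) _ _ hvw, hw⟩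

theorem eq_green_of_ne_red (hnw : ∀ v, c v ≠ Color.white) {s : ℝ} (hs : 0 ≤ s) {v : V}
    (hv : v ∈ A.verts) (h : ev.col s v ≠ Color.red) : ev.col s v = Color.green := by
  have hw : ev.col s v ≠ Color.white := fun hw => hnw v ((ev.white_iff s hs v hv).mp hw).1
  cases hcol : ev.col s v <;> simp_all

theorem tau_le_of_opn {t : ℝ} (ht : 0 ≤ t) {e : Sym2 V} (h : ev.opn t e) : τ e ≤ t := by
  rw [ev.open_iff t ht e (ev.mem_edgeSet_of_opn h)] at h
  have hvol : volume {s : ℝ | 0 ≤ s ∧ s < t ∧ greenTouch ev.col s e} ≤ ENNReal.ofReal t := by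
    refine (measure_mono (show _ ⊆ Ico 0 t from fun s hs => ⟨hs.1, hs.2.1⟩)).trans ?_
    rw [Real.volume_Ico, sub_zero]
  exact (ENNReal.ofReal_le_ofReal_iff ht).mp (h.trans hvol)

theorem opn_of_greenTouch {t : ℝ} (ht : 0 ≤ t) {e : Sym2 V} (he : e ∈ A.edgeSet) (hτt : τ e ≤ t)
    (hgreen : ∀ s, 0 ≤ s → s < τ e → greenTouch ev.col s e) : ev.opn t e := by
  rw [ev.open_iff t ht e he]
  calc ENNReal.ofReal (τ e) ≤ volume (Ico 0 (τ e)) := by rw [Real.volume_Ico, sub_zero]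
    _ ≤ volume {s : ℝ | 0 ≤ s ∧ s < t ∧ greenTouch ev.col s e} :=
      measure_mono fun s hs => ⟨hs.1, hs.2.trans_le hτt, hgreen s hs.1 hs.2⟩

/-- Red is absorbing, so if `e` lacked a green end-vertex at some `s`, it would have none
afterwards, and the green-touching time before opening would be less than `τ e`. -/
theorem greenTouch_of_opn (hnw : ∀ v, c v ≠ Color.white) {t : ℝ} (ht : 0 ≤ t) {e : Sym2 V}
    (h : ev.opn t e) {s : ℝ} (hs0 : 0 ≤ s) (hsτ : s < τ e) : greenTouch ev.col s e := by
  by_contra hnot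
  have he := ev.mem_edgeSet_of_opn h
  have hsub : {r : ℝ | 0 ≤ r ∧ r < t ∧ greenTouch ev.col r e} ⊆ Ico 0 s := by
    rintro r ⟨hr0, -, v, hv, hgreen⟩
    refine ⟨hr0, lt_of_not_ge fun hsr => ?_⟩
    have hvA := A.mem_verts_of_mem_edge he hv
    have hred : ev.col s v = Color.red := by
      by_contra hne
      exact hnot ⟨v, hv, ev.eq_green_of_ne_red hnw hs0 hvA hne⟩
    rw [ev.red_mono hs0 hsr hvA hred] at hgreen
    cases hgreen
  rw [ev.open_iff t ht e he] at h
  have hvol := h.trans (measure_mono hsub)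
  rw [Real.volume_Ico, sub_zero, ENNReal.ofReal_le_ofReal_iff hs0] at hvol
  exact hsτ.not_ge hvol

theorem opn_of_tau_le (hnw : ∀ v, c v ≠ Color.white) {t : ℝ} (ht : 0 ≤ t) {e : Sym2 V}
    (h : ev.opn t e) {t' : ℝ} (ht' : 0 ≤ t') (hτt' : τ e ≤ t') : ev.opn t' e :=
  ev.opn_of_greenTouch ht' (ev.mem_edgeSet_of_opn h) hτt'
    fun _ hs0 hsτ => ev.greenTouch_of_opn hnw ht h hs0 hsτ

theorem redConn_of_openConn {t : ℝ} (ht : 0 ≤ t) {v w : V} (h : openConn A ev.opn t v w)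
    (hw : c w = Color.red) : redConn A ev.opn ev.col t v w := by
  induction h using Relation.ReflTransGen.head_induction_on with
  | refl => exact .refl
  | @head a b hab hbw ih =>
    refine .head ⟨hab.1, hab.2, ?_, ?_⟩ ih
    · exact (ev.red_iff t ht a (A.edge_vert hab.1)).mpr ⟨w, .head hab hbw, hw⟩
    · exact (ev.red_iff t ht b (A.edge_vert hab.1.symm)).mpr ⟨w, hbw, hw⟩

def SeedsSeparated (t : ℝ) : Prop :=
  ∀ u v, c u = Color.red → c v = Color.red → openConn A ev.opn t u v → u = v

/-- Passing from `tm` to `t` opens at most the edge `e`, which had a green end-vertex `z` at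
time `tm`; as `z` was not connected to a seed, a new seed-to-seed path would give one at `tm`. -/
theorem seedsSeparated_of_single_new_edge (hnw : ∀ v, c v ≠ Color.white) {t tm : ℝ}
    {e : Sym2 V} (htm0 : 0 ≤ tm) (htm : tm < τ e) (htmt : tm ≤ t)
    (hprev : ∀ f ∈ A.edgeSet, τ f ≤ t → f ≠ e → τ f ≤ tm) (hsep : ev.SeedsSeparated tm) :
    ev.SeedsSeparated t := by
  have ht : 0 ≤ t := htm0.trans htmt
  have hstep : ∀ a b, A.Adj a b ∧ ev.opn t s(a, b) →
      (A.Adj a b ∧ ev.opn tm s(a, b)) ∨ s(a, b) = e := by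
    rintro a b ⟨hab, hopn⟩
    refine or_iff_not_imp_right.mpr fun hne => ⟨hab, ev.opn_of_tau_le hnw ht hopn htm0 ?_⟩
    exact hprev _ (ev.mem_edgeSet_of_opn hopn) (ev.tau_le_of_opn ht hopn) hne
  intro p q hp hq hpq
  by_cases he : ev.opn t e
  · obtain ⟨z, hz, hzg⟩ := ev.greenTouch_of_opn hnw ht he htm0 htm
    have hz_isolated : ∀ y, c y = Color.red → ¬ openConn A ev.opn tm z y := by
      intro y hy hzy
      have hzA := A.mem_verts_of_mem_edge (ev.mem_edgeSet_of_opn he) hz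
      rw [(ev.red_iff tm htm0 z hzA).mpr ⟨y, hzy, hy⟩] at hzg
      cases hzg
    have hsplit : ∀ {u v}, openConn A ev.opn t u v → openConn A ev.opn tm u v ∨
        openConn A ev.opn tm z v ∨ openConn A ev.opn tm (Sym2.Mem.other hz) v :=
      Relation.ReflTransGen.split_at_edge fun a b hab => (Sym2.other_spec hz).symm ▸ hstep a b hab
    rcases hsplit hpq with h | h | hwq
    · exact hsep p q hp hq h
    · exact absurd h (hz_isolated q hq)
    rcases hsplit hpq.symm with h | h | hwp
    · exact (hsep q p hq hp h).symm
    · exact absurd h (hz_isolated p hp)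
    · exact hsep p q hp hq (hwp.symm.trans hwq)
  · refine hsep p q hp hq (Relation.ReflTransGen.mono (fun a b hab => ?_) _ _ hpq)
    exact (hstep a b hab).resolve_right fun hab_e => he (hab_e ▸ hab.2)

/-- Induction on the number of edges that can be open at time `t`. -/
theorem seedsSeparated [Finite V] (hnw : ∀ v, c v ≠ Color.white)
    (hτpos : ∀ e ∈ A.edgeSet, 0 < τ e) (hτinj : Set.InjOn τ A.edgeSet) {t : ℝ} (ht : 0 ≤ t) :
    ev.SeedsSeparated t := by
  suffices ∀ n t, 0 ≤ t → {e ∈ A.edgeSet | τ e ≤ t}.ncard = n → ev.SeedsSeparated t from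
    this _ t ht rfl
  intro n
  induction n using Nat.strong_induction_on with
  | _ n ih =>
  intro t ht hn
  set S := {e ∈ A.edgeSet | τ e ≤ t}
  rcases S.eq_empty_or_nonempty with hS | hS
  · intro p q _ _ hpq
    rcases hpq.cases_head with rfl | ⟨_, ⟨-, hopn⟩, -⟩
    · rfl
    · exact absurd (show _ ∈ S from ⟨ev.mem_edgeSet_of_opn hopn, ev.tau_le_of_opn ht hopn⟩)
        (hS ▸ notMem_empty _)
  obtain ⟨e, ⟨heA, heτ⟩, hmax⟩ := Set.exists_max_image S τ S.toFinite hS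
  have hlt : ∀ r ∈ τ '' (S \ {e}), r < τ e := by
    rintro _ ⟨f, ⟨hfS, hfe⟩, rfl⟩
    exact (hmax f hfS).lt_of_ne fun h => hfe (hτinj hfS.1 heA h)
  obtain ⟨tm, htm0, htm, hle⟩ :=
    Real.exists_nonneg_lt_of_forall_lt ((S \ {e}).toFinite.image τ) (hτpos e heA) hlt
  have htmt : tm ≤ t := htm.le.trans heτ
  refine ev.seedsSeparated_of_single_new_edge hnw htm0 htm htmt
    (fun f hf hft hfe => hle _ ⟨f, ⟨⟨hf, hft⟩, hfe⟩, rfl⟩) ?_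
  refine ih _ ?_ tm htm0 rfl
  rw [← hn]
  refine Set.ncard_lt_ncard ⟨fun f ⟨hf, hftm⟩ => ⟨hf, hftm.trans htmt⟩, fun hsub => ?_⟩
  exact htm.not_ge (hsub ⟨heA, heτ⟩).2

end Evolution

section Invasion

variable {G : SimpleGraph V} {c : V → Color} {τ : Sym2 V → ℝ} {x : V} {E : ℕ → Sym2 V}

theorem treeVerts_succ (n : ℕ) : treeVerts x E (n + 1) = treeVerts x E n ∪ {v | v ∈ E n} := by
  ext v
  simp only [treeVerts, mem_union, mem_iUnion, Nat.lt_succ_iff_lt_or_eq]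
  grind

theorem self_mem_treeVerts (n : ℕ) : x ∈ treeVerts x E n := Or.inl rfl

theorem InvStep.tau_le_of_openConn {k : ℕ} (hk : InvStep G τ x E k)
    (ev : Evolution (⊤ : G.Subgraph) c τ) {s : ℝ} (hs : 0 ≤ s) {y w : V}
    (h : openConn (⊤ : G.Subgraph) ev.opn s y w) (hy : y ∈ treeVerts x E k)
    (hw : w ∉ treeVerts x E k) :
    τ (E k) ≤ s := by
  obtain ⟨a, b, ⟨hab, hopn⟩, ha, hb⟩ := h.exists_step_mem_not_mem hy hw
  have hboundary := Sym2.existsUnique_mem_and_mem_of_mem_of_not_mem ha hb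
  exact (hk.2.2 _ (G.mem_edgeSet.mpr (SimpleGraph.Subgraph.top_adj.mp hab)) hboundary).trans
    (ev.tau_le_of_opn hs hopn)

namespace StoppedInvasion

variable {m : ℕ} {R : V}

theorem not_red_of_mem_treeVerts (hinv : StoppedInvasion G c τ x E m R)
    (hx : c x ≠ Color.red) {k : ℕ} (hk : k < m) {v : V} (hv : v ∈ treeVerts x E k) :
    c v ≠ Color.red := by
  induction k generalizing v with
  | zero =>
    obtain rfl : v = x := by simpa [treeVerts] using hv
    exact hx
  | succ k ih =>
    rw [treeVerts_succ] at hv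
    by_cases hvk : v ∈ treeVerts x E k
    · exact ih (by omega) hvk
    · have hvE : v ∈ E k := hv.resolve_left hvk
      exact fun hred => absurd ((hinv.2.2.1 k (by omega) v hvE hvk).mp hred) (by omega)

/-- A red tree vertex at time `s` is joined by open edges to a seed, which lies outside the tree;
that path leaves the tree through an edge no cheaper than the invaded one. -/
theorem tau_le_of_red (hinv : StoppedInvasion G c τ x E m R) (hx : c x ≠ Color.red)
    (ev : Evolution (⊤ : G.Subgraph) c τ) {k : ℕ} (hk : k < m) {s : ℝ} (hs : 0 ≤ s) {y : V}
    (hy : y ∈ treeVerts x E k) (hred : ev.col s y = Color.red) : τ (E k) ≤ s := by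
  obtain ⟨w, hyw, hw⟩ := (ev.red_iff s hs y (by simp)).mp hred
  exact (hinv.2.1 k hk).tau_le_of_openConn ev hs hyw hy
    fun hwT => hinv.not_red_of_mem_treeVerts hx hk hwT hw

/-- The tree end of `E k` stays green until time `τ (E k)`, so `E k` opens then. -/
theorem opn_of_red (hinv : StoppedInvasion G c τ x E m R) (hx : c x ≠ Color.red)
    (hnw : ∀ v, c v ≠ Color.white) (ev : Evolution (⊤ : G.Subgraph) c τ) {t : ℝ} (ht : 0 ≤ t)
    (hxred : ev.col t x = Color.red) {k : ℕ} (hk : k < m) : ev.opn t (E k) := by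
  obtain ⟨hedge, ⟨a, ⟨haE, haT⟩, -⟩, -⟩ := hinv.2.1 k hk
  refine ev.opn_of_greenTouch ht (by simpa using hedge)
    (hinv.tau_le_of_red hx ev hk ht (self_mem_treeVerts k) hxred) fun s hs0 hsτ => ⟨a, haE, ?_⟩
  exact ev.eq_green_of_ne_red hnw hs0 (by simp)
    fun hred => hsτ.not_ge (hinv.tau_le_of_red hx ev hk hs0 haT hred)

theorem openConn_of_mem_treeVerts (hinv : StoppedInvasion G c τ x E m R)
    (ev : Evolution (⊤ : G.Subgraph) c τ) {t : ℝ} (hopen : ∀ k < m, ev.opn t (E k)) {k : ℕ}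
    (hk : k ≤ m) {v : V} (hv : v ∈ treeVerts x E k) : openConn (⊤ : G.Subgraph) ev.opn t x v := by
  induction k generalizing v with
  | zero =>
    obtain rfl : v = x := by simpa [treeVerts] using hv
    exact .refl
  | succ k ih =>
    rw [treeVerts_succ] at hv
    rcases hv with hv | hvE
    · exact ih (by omega) hv
    obtain ⟨hedge, ⟨a, ⟨haE, haT⟩, -⟩, -⟩ := hinv.2.1 k (by omega)
    have hxa := ih (by omega) haT
    obtain ⟨b, hEk⟩ : ∃ b, E k = s(a, b) := ⟨_, (Sym2.other_spec haE).symm⟩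
    rw [hEk] at hvE
    rcases Sym2.mem_iff.mp hvE with rfl | rfl
    · exact hxa
    · exact hxa.tail ⟨G.mem_edgeSet.mp (hEk ▸ hedge), hEk ▸ hopen k (by omega)⟩

theorem last_mem_treeVerts (hinv : StoppedInvasion G c τ x E m R) : R ∈ treeVerts x E m := by
  obtain ⟨hm, -, -, hR, -⟩ := hinv
  obtain ⟨n, rfl⟩ := Nat.exists_eq_add_one_of_ne_zero hm.ne'
  rw [treeVerts_succ]
  exact Or.inr hR

end StoppedInvasion

end Invasion

theorem statement7_general
    {V : Type*} [Fintype V] (G : SimpleGraph V)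
    (c : V → Color) (hnw : ∀ v, c v ≠ Color.white)
    (τ : Sym2 V → ℝ) (hτpos : ∀ e ∈ G.edgeSet, 0 < τ e)
    (hτinj : ∀ e ∈ G.edgeSet, ∀ f ∈ G.edgeSet, τ e = τ f → e = f)
    (x : V) (hx : c x = Color.green)
    (E : ℕ → Sym2 V) (m : ℕ) (R : V) (hinv : StoppedInvasion G c τ x E m R)
    (ev : Evolution (⊤ : G.Subgraph) c τ) (t₀ : ℝ) (ht₀ : becomesRedAt ev x t₀) :
    redConn (⊤ : G.Subgraph) ev.opn ev.col t₀ x R ∧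
      ∀ w, redConn (⊤ : G.Subgraph) ev.opn ev.col t₀ x w → c w = Color.red → w = R := by
  obtain ⟨ht₀0, hxred, -⟩ := ht₀
  have hx' : c x ≠ Color.red := by simp [hx]
  have hxR : openConn (⊤ : G.Subgraph) ev.opn t₀ x R :=
    hinv.openConn_of_mem_treeVerts ev (fun _ hk => hinv.opn_of_red hx' hnw ev ht₀0 hxred hk)
      le_rfl hinv.last_mem_treeVerts
  have hsep := ev.seedsSeparated hnw (by simpa using hτpos)
    (by rw [SimpleGraph.Subgraph.edgeSet_top]; exact fun e he f hf => hτinj e he f hf) ht₀0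
  have hcR : c R = Color.red := hinv.2.2.2.2.2
  refine ⟨ev.redConn_of_openConn ht₀0 hxR hcR, fun w hxw hw => ?_⟩
  exact hsep w R hw hcR ((openConn_of_redConn hxw).symm.trans hxR)

/-- In the finite growth model with no white vertices, the first initially
red vertex `R` invaded by the stopped invasion procedure from an initially green vertex `x`
is responsible for `x` becoming red:  when `x` becomes red, `R` is the unique initially red
vertex of the red cluster containing `x`. -/
theorem statement7
    {V : Type*} [Fintype V] (G : SimpleGraph V) (hconn : G.Connected)
    (c : V → Color) (hnw : ∀ v, c v ≠ Color.white)
    (hg : ∃ v, c v = Color.green) (hr : ∃ v, c v = Color.red)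
    (τ : Sym2 V → ℝ) (hτpos : ∀ e ∈ G.edgeSet, 0 < τ e)
    (hτinj : ∀ e ∈ G.edgeSet, ∀ f ∈ G.edgeSet, τ e = τ f → e = f)
    (x : V) (hx : c x = Color.green)
    (E : ℕ → Sym2 V) (m : ℕ) (R : V) (hinv : StoppedInvasion G c τ x E m R)
    (ev : Evolution (⊤ : G.Subgraph) c τ) (t₀ : ℝ) (ht₀ : becomesRedAt ev x t₀) :
    redConn (⊤ : G.Subgraph) ev.opn ev.col t₀ x R ∧
      ∀ w, redConn (⊤ : G.Subgraph) ev.opn ev.col t₀ x w → c w = Color.red → w = R :=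
  statement7_general G c hnw τ hτpos hτinj x hx E m R hinv ev t₀ ht₀
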